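/- arXiv:2210.01416 — 3 statements merged into one kernel-verified Lean document; each statement's English description precedes it below -/
import Mathlib

section
/- Let B ⊂ ℂ^{n-1} be a ball, Δ ⊂ ℂ the unit disc, 0 < r < R < 1, and f holomorphic on a neighborhood of the closure of B × RΔ. Then for every 0 < ε < 1 - R and z ∈ (1-ε)(B × Δ) with second coordinate of modulus < r, |f(z)|² is bounded by a constant (depending only on B, R, r, ε) times the integral of |f|² over B × (RΔ \ rΔ̄). -/
open Complex Topology Filter Metric MeasureTheory Set

noncomputable section

/-- Subharmonicity on a subset of `ℂ`: upper semicontinuity together with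
majorization by real parts of holomorphic polynomials on closed discs
(the classical harmonic-majorant characterization). -/
def SubharmonicOn (u : ℂ → EReal) (s : Set ℂ) : Prop :=
  UpperSemicontinuousOn u s ∧
  ∀ (c : ℂ) (r : ℝ), 0 < r → Metric.closedBall c r ⊆ s →
    ∀ p : Polynomial ℂ,
      (∀ z ∈ Metric.sphere c r, u z ≤ ((p.eval z).re : EReal)) →
      ∀ z ∈ Metric.closedBall c r, u z ≤ ((p.eval z).re : EReal)

/-- Plurisubharmonicity on a subset of a complex normed space:
upper semicontinuity and subharmonicity along every complex line. -/
def PlurisubharmonicOn {E : Type*} [NormedAddCommGroup E] [NormedSpace ℂ E]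
    (u : E → EReal) (Ω : Set E) : Prop :=
  UpperSemicontinuousOn u Ω ∧
  ∀ z w : E, SubharmonicOn (fun t : ℂ => u (z + t • w)) {t : ℂ | z + t • w ∈ Ω}

/-- A function is pluriharmonic on `Ω` if it is locally the real part of
a holomorphic function. -/
def PluriharmonicOn {E : Type*} [NormedAddCommGroup E] [NormedSpace ℂ E]
    (h : E → ℝ) (Ω : Set E) : Prop :=
  ∀ z ∈ Ω, ∃ U : Set E, IsOpen U ∧ z ∈ U ∧ U ⊆ Ω ∧
    ∃ f : E → ℂ, DifferentiableOn ℂ f U ∧ ∀ w ∈ U, h w = (f w).re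

/-- `K` is complete pluripolar in `S`: every point of `K` has a neighborhood
`U ⊆ S` and a plurisubharmonic function `φ` on `U` with `K ∩ U = φ⁻¹(-∞)`. -/
def CompletePluripolarIn {E : Type*} [NormedAddCommGroup E] [NormedSpace ℂ E]
    (K S : Set E) : Prop :=
  ∀ z ∈ K, ∃ U : Set E, IsOpen U ∧ z ∈ U ∧ U ⊆ S ∧
    ∃ φ : E → EReal, PlurisubharmonicOn φ U ∧ K ∩ U = {w ∈ U | φ w = ⊥}

/-- The Levi form of a real-valued function `φ` at `z` in the complex direction `v`:
`∂∂̄φ(z)(v,v̄)`, computed as one quarter of the Laplacian of `t ↦ φ (z + t v)` at `t = 0`. -/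
def leviForm {E : Type*} [NormedAddCommGroup E] [NormedSpace ℂ E]
    (φ : E → ℝ) (z v : E) : ℝ :=
  (1/4) * ((iteratedFDeriv ℝ 2 (fun t : ℂ => φ (z + t • v)) 0) ![1, 1]
        + (iteratedFDeriv ℝ 2 (fun t : ℂ => φ (z + t • v)) 0) ![Complex.I, Complex.I])

/-- The Wirtinger derivative `∂φ(z)(v) = Σ vⱼ ∂φ/∂zⱼ` of a real-valued function
in the complex direction `v`. -/
def wirtDeriv {E : Type*} [NormedAddCommGroup E] [NormedSpace ℂ E]
    (φ : E → ℝ) (z v : E) : ℂ :=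
  (1/2 : ℂ) * ((fderiv ℝ φ z v : ℝ) - Complex.I * ((fderiv ℝ φ z (Complex.I • v) : ℝ) : ℂ))

end

/-! Write `z = (z₁, z₂)`. For each fixed `y`, Cauchy's formula for `g = f(y, ·)²` on a circle
`|w| = ρ` with `r < ρ < R` gives `(ρ - r) ‖g z₂‖ ≤ ρ · (mean of ‖g‖ over the circle)`, because
`|z₂| ≤ r`; multiplying by `ρ` and integrating over `ρ ∈ (r, R)` turns the right side into an area
integral over the annulus. In the first `n - 1` variables, `‖f(·, z₂)²‖` at `z₁` is bounded by its
integral over the polydisc of radius `ε s` around `z₁` (the case `r = 0` of the same estimate,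
iterated with Fubini), and this polydisc lies in `B` because `z₁ ∈ (1 - ε) B`. Fubini combines
the two bounds. -/

open Real

variable {E : Type*} [NormedAddCommGroup E] [NormedSpace ℂ E]
variable {V : Type*} [NormedAddCommGroup V] [NormedSpace ℝ V]

theorem norm_circleAverage_le_circleAverage_norm {f : ℂ → E} {c : ℂ} {R : ℝ} :
    ‖circleAverage f c R‖ ≤ circleAverage (fun z ↦ ‖f z‖) c R := by
  rw [circleAverage, circleAverage, norm_smul, smul_eq_mul, Real.norm_of_nonneg (by positivity)]
  gcongr
  exact intervalIntegral.norm_integral_le_integral_norm two_pi_pos.le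

theorem DiffContOnCl.mul_norm_le_mul_circleAverage_norm [CompleteSpace E] {g : ℂ → E}
    {c ζ : ℂ} {ρ : ℝ} (hg : DiffContOnCl ℂ g (ball c ρ)) (hζ : ζ ∈ ball c ρ) :
    (ρ - ‖ζ - c‖) * ‖g ζ‖ ≤ ρ * Real.circleAverage (fun z ↦ ‖g z‖) c ρ := by
  have hρ : 0 < ρ := pos_of_mem_ball hζ
  have hd : 0 < ρ - ‖ζ - c‖ := sub_pos.2 (mem_ball_iff_norm.1 hζ)
  rw [← abs_of_pos hρ] at hg hζ
  have hgc : ContinuousOn g (sphere c |ρ|) := hg.continuousOn.mono <|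
    sphere_subset_closedBall.trans (closure_ball c (abs_pos.2 hρ.ne').ne').symm.subset
  have hne : ∀ z ∈ sphere c |ρ|, z - ζ ≠ 0 := fun z hz h ↦
    sphere_disjoint_ball.ne_of_mem hz hζ (sub_eq_zero.1 h)
  set h : ℂ → E := fun z ↦ ((z - c) / (z - ζ)) • g z
  have hpoint : ∀ z ∈ sphere c |ρ|, (ρ - ‖ζ - c‖) * ‖h z‖ ≤ ρ * ‖g z‖ := by
    intro z hz
    rw [mem_sphere_iff_norm, abs_of_pos hρ] at hz
    have hzζ : ρ - ‖ζ - c‖ ≤ ‖z - ζ‖ := by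
      rw [← hz]; linarith [norm_sub_le_norm_sub_add_norm_sub z ζ c]
    simp only [h, norm_smul, norm_div, hz, ← mul_assoc]
    gcongr
    calc (ρ - ‖ζ - c‖) * (ρ / ‖z - ζ‖) ≤ ‖z - ζ‖ * (ρ / ‖z - ζ‖) := by gcongr
      _ = ρ := mul_div_cancel₀ _ (hd.trans_le hzζ).ne'
  calc (ρ - ‖ζ - c‖) * ‖g ζ‖ = (ρ - ‖ζ - c‖) * ‖Real.circleAverage h c ρ‖ := by
        rw [hg.circleAverage_smul_div hζ]
    _ ≤ (ρ - ‖ζ - c‖) * Real.circleAverage (fun z ↦ ‖h z‖) c ρ := by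
        gcongr
        exact norm_circleAverage_le_circleAverage_norm
    _ = Real.circleAverage (fun z ↦ (ρ - ‖ζ - c‖) * ‖h z‖) c ρ :=
        (circleAverage_fun_smul (a := ρ - ‖ζ - c‖)).symm
    _ ≤ Real.circleAverage (fun z ↦ ρ * ‖g z‖) c ρ := by
        refine circleAverage_mono (ContinuousOn.circleIntegrable' ?_)
          (ContinuousOn.circleIntegrable' ?_) hpoint
        · exact continuousOn_const.mul (((continuousOn_id.sub continuousOn_const).div
            (continuousOn_id.sub continuousOn_const) hne).smul hgc).norm
        · exact continuousOn_const.mul hgc.norm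
    _ = ρ * Real.circleAverage (fun z ↦ ‖g z‖) c ρ := circleAverage_fun_smul (a := ρ)

theorem setIntegral_Ioo_circleMap_eq_two_pi_smul_circleAverage (f : ℂ → V) (c : ℂ) (R : ℝ) :
    ∫ θ in Ioo (-π) π, f (circleMap c R θ) = (2 * π) • circleAverage f c R := by
  rw [circleAverage_eq_integral_add (-π), smul_inv_smul₀ two_pi_pos.ne',
    intervalIntegral.integral_comp_add_right (fun θ ↦ f (circleMap c R θ)), zero_add,
    show 2 * π + -π = π by ring, intervalIntegral.integral_of_le (by linarith [pi_pos]),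
    integral_Ioc_eq_integral_Ioo]

theorem setIntegral_annulus_eq_integral_circleAverage {f : ℂ → V} {c : ℂ} {a b : ℝ}
    (ha : 0 ≤ a) (hab : a ≤ b) (hf : ContinuousOn f (closedBall c b)) :
    ∫ z in ball c b \ closedBall c a, f z = (2 * π) • ∫ ρ in a..b, ρ • circleAverage f c ρ := by
  set A := ball c b \ closedBall c a
  set H : ℝ × ℝ → V := fun p ↦ p.1 • f (circleMap c p.1 p.2)
  have hpolar : ∀ p ∈ polarCoord.target,
      p.1 • A.indicator f (Complex.polarCoord.symm p + c) = (Ioo a b ×ˢ univ).indicator H p := by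
    rintro ⟨ρ, θ⟩ ⟨hρ, -⟩
    have hcirc : Complex.polarCoord.symm (ρ, θ) + c = circleMap c ρ θ := by
      rw [Complex.polarCoord_symm_apply, circleMap, Complex.exp_mul_I]
      push_cast; ring
    have hmem : circleMap c ρ θ ∈ A ↔ (ρ, θ) ∈ Ioo a b ×ˢ univ := by
      simp [A, dist_eq_norm, abs_of_pos (show (0 : ℝ) < ρ from hρ), and_comm]
    by_cases h : (ρ, θ) ∈ Ioo a b ×ˢ univ
    · rw [hcirc, indicator_of_mem (hmem.2 h), indicator_of_mem h]
    · rw [hcirc, indicator_of_notMem (mt hmem.1 h), indicator_of_notMem h, smul_zero]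
  have hH : IntegrableOn H (Ioo a b ×ˢ Ioo (-π) π) := by
    refine (ContinuousOn.integrableOn_compact (isCompact_Icc.prod isCompact_Icc) ?_).mono_set
      (prod_mono Ioo_subset_Icc_self Ioo_subset_Icc_self)
    refine continuousOn_fst.smul (hf.comp (by fun_prop) ?_)
    rintro ⟨ρ, θ⟩ ⟨hρ, -⟩
    simp [dist_eq_norm, abs_of_nonneg (ha.trans hρ.1), hρ.2]
  have htarget : polarCoord.target ∩ Ioo a b ×ˢ univ = Ioo a b ×ˢ Ioo (-π) π := by
    rw [polarCoord_target, prod_inter_prod, inter_univ, Ioi_inter_Ioo, sup_eq_right.2 ha]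
  calc ∫ z in A, f z = ∫ z, A.indicator f (z + c) := by
        rw [← integral_indicator (measurableSet_ball.diff measurableSet_closedBall),
          integral_add_right_eq_self]
    _ = ∫ p in polarCoord.target, (Ioo a b ×ˢ univ).indicator H p := by
        rw [← Complex.integral_comp_polarCoord_symm]
        exact setIntegral_congr_fun polarCoord.open_target.measurableSet hpolar
    _ = ∫ ρ in Ioo a b, ∫ θ in Ioo (-π) π, H (ρ, θ) := by
        rw [setIntegral_indicator (measurableSet_Ioo.prod MeasurableSet.univ), htarget,
          Measure.volume_eq_prod, setIntegral_prod _ hH]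
    _ = (2 * π) • ∫ ρ in a..b, ρ • circleAverage f c ρ := by
        simp only [H, integral_smul, setIntegral_Ioo_circleMap_eq_two_pi_smul_circleAverage,
          smul_comm _ (2 * π)]
        rw [intervalIntegral.integral_of_le hab, integral_Ioc_eq_integral_Ioo]

theorem DifferentiableOn.integral_mul_norm_le_setIntegral_annulus [CompleteSpace E]
    {g : ℂ → E} {c ζ : ℂ} {a b : ℝ} (hg : DifferentiableOn ℂ g (closedBall c b)) (hab : a ≤ b)
    (hζ : ‖ζ - c‖ ≤ a) :
    (∫ ρ in a..b, ρ * (ρ - a)) * ‖g ζ‖ ≤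
      b / (2 * π) * ∫ z in ball c b \ closedBall c a, ‖g z‖ := by
  have ha : 0 ≤ a := (norm_nonneg _).trans hζ
  have hnorm : ContinuousOn (fun z ↦ ‖g z‖) (closedBall c b) := hg.continuousOn.norm
  have havg : ContinuousOn (fun ρ ↦ ρ * circleAverage (fun z ↦ ‖g z‖) c ρ) (uIcc a b) := by
    rw [uIcc_of_le hab]
    refine continuousOn_id.mul (ContinuousOn.circleAverage (hnorm.mono ?_) ?_)
    · intro z hz; simp_all [dist_eq_norm]
    · intro ρ hρ; exact ha.trans hρ.1
  rw [setIntegral_annulus_eq_integral_circleAverage ha hab hnorm, smul_eq_mul, ← mul_assoc,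
    div_mul_cancel₀ _ two_pi_pos.ne', ← intervalIntegral.integral_mul_const,
    ← intervalIntegral.integral_const_mul]
  refine intervalIntegral.integral_mono_on_of_le_Ioo hab
    ((by fun_prop : Continuous fun ρ : ℝ ↦ ρ * (ρ - a) * ‖g ζ‖).intervalIntegrable _ _)
    (havg.intervalIntegrable.const_mul b) fun ρ hρ ↦ ?_
  have hρ₀ : 0 < ρ := ha.trans_lt hρ.1
  have havg₀ : 0 ≤ circleAverage (fun z ↦ ‖g z‖) c ρ :=
    circleAverage_nonneg_of_nonneg fun z _ ↦ norm_nonneg _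
  calc ρ * (ρ - a) * ‖g ζ‖ ≤ ρ * ((ρ - ‖ζ - c‖) * ‖g ζ‖) := by
        rw [mul_assoc]; gcongr
    _ ≤ ρ * (ρ * circleAverage (fun z ↦ ‖g z‖) c ρ) :=
        mul_le_mul_of_nonneg_left ((hg.diffContOnCl_ball (closedBall_subset_closedBall
          hρ.2.le)).mul_norm_le_mul_circleAverage_norm (mem_ball_iff_norm.2 (hζ.trans_lt hρ.1)))
          hρ₀.le
    _ ≤ b * (ρ • circleAverage (fun z ↦ ‖g z‖) c ρ) := by
        rw [smul_eq_mul]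
        gcongr
        exact hρ.2.le

theorem DifferentiableOn.norm_le_setIntegral_ball [CompleteSpace E] {g : ℂ → E} {c : ℂ}
    {δ : ℝ} (hg : DifferentiableOn ℂ g (closedBall c δ)) (hδ : 0 < δ) :
    ‖g c‖ ≤ 3 / (2 * π * δ ^ 2) * ∫ z in ball c δ, ‖g z‖ := by
  have hcube : ∫ ρ in (0 : ℝ)..δ, ρ * (ρ - 0) = δ ^ 3 / 3 := by
    norm_num [← pow_two, integral_pow]
  have hnull : (ball c δ \ closedBall c 0 : Set ℂ) =ᵐ[volume] ball c δ := by
    rw [closedBall_zero]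
    exact sdiff_ae_eq_self.2 (measure_mono_null inter_subset_right (measure_singleton c))
  have h := hg.integral_mul_norm_le_setIntegral_annulus (ζ := c) hδ.le (by simp)
  rw [hcube, setIntegral_congr_set hnull] at h
  calc ‖g c‖ = 3 / δ ^ 3 * (δ ^ 3 / 3 * ‖g c‖) := by field_simp
    _ ≤ 3 / δ ^ 3 * (δ / (2 * π) * ∫ z in ball c δ, ‖g z‖) := by gcongr
    _ = 3 / (2 * π * δ ^ 2) * ∫ z in ball c δ, ‖g z‖ := by field_simp

theorem setIntegral_ball_eq_setIntegral_prod_fin_cons {X : Type*} [MeasureSpace X]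
    [SigmaFinite (volume : Measure X)] [PseudoMetricSpace X] {m : ℕ}
    (F : (Fin (m + 1) → X) → V) (c : Fin (m + 1) → X) {δ : ℝ} (hδ : 0 < δ) :
    ∫ x in ball c δ, F x = ∫ p in ball (c 0) δ ×ˢ ball (Fin.tail c) δ, F (Fin.cons p.1 p.2) := by
  set e := (MeasurableEquiv.piFinSuccAbove (fun _ : Fin (m + 1) ↦ X) 0).symm
  have he : ∀ p, e p = Fin.cons p.1 p.2 := fun p ↦ by simp [e]; rfl
  have hpre : e ⁻¹' ball c δ = ball (c 0) δ ×ˢ ball (Fin.tail c) δ := by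
    ext ⟨a, y⟩
    simp only [mem_preimage, he, mem_prod, mem_ball, dist_pi_lt_iff hδ, Fin.forall_fin_succ,
      Fin.cons_zero, Fin.cons_succ, Fin.tail]
  simp_rw [← hpre, ← he]
  exact ((volume_preserving_piFinSuccAbove _ 0).symm.setIntegral_preimage_emb
    e.measurableEmbedding F _).symm

/-- In `Fin m → ℂ`, with its sup norm, `ball c δ` is the polydisc. -/
theorem DifferentiableOn.norm_le_setIntegral_polydisc [CompleteSpace E] {m : ℕ}
    {g : (Fin m → ℂ) → E} {c : Fin m → ℂ} {δ : ℝ} (hg : DifferentiableOn ℂ g (closedBall c δ))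
    (hδ : 0 < δ) :
    ‖g c‖ ≤ (3 / (2 * π * δ ^ 2)) ^ m * ∫ y in ball c δ, ‖g y‖ := by
  induction m with
  | zero =>
    have hball : ball c δ = univ := eq_univ_of_forall fun y ↦ by
      rw [Subsingleton.elim y c]; exact mem_ball_self hδ
    rw [pow_zero, one_mul, hball, Measure.restrict_univ, volume_pi, Measure.pi_of_empty _ c,
      integral_dirac]
  | succ m ih =>
    set K := 3 / (2 * π * δ ^ 2)
    have hcons : ∀ a ∈ closedBall (c 0) δ, ∀ y ∈ closedBall (Fin.tail c) δ,
        (Fin.cons a y : Fin (m + 1) → ℂ) ∈ closedBall c δ := by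
      intro a ha y hy
      rw [mem_closedBall, dist_pi_le_iff hδ.le, Fin.forall_fin_succ]
      exact ⟨ha, fun j ↦ (dist_le_pi_dist y (Fin.tail c) j).trans hy⟩
    have hslice : MapsTo (fun a ↦ (Fin.cons a (Fin.tail c) : Fin (m + 1) → ℂ))
        (closedBall (c 0) δ) (closedBall c δ) := fun a ha ↦
      hcons a ha _ (mem_closedBall_self hδ.le)
    set G : ℂ × (Fin m → ℂ) → ℝ := fun p ↦ ‖g (Fin.cons p.1 p.2)‖
    have hG : IntegrableOn G (ball (c 0) δ ×ˢ ball (Fin.tail c) δ) := by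
      refine (ContinuousOn.integrableOn_compact
        ((isCompact_closedBall _ _).prod (isCompact_closedBall _ _)) ?_).mono_set
        (prod_mono ball_subset_closedBall ball_subset_closedBall)
      exact hg.continuousOn.norm.comp (by fun_prop) fun p hp ↦ hcons _ hp.1 _ hp.2
    have hG' : Integrable G ((volume.restrict (ball (c 0) δ)).prod
        (volume.restrict (ball (Fin.tail c) δ))) := by
      rwa [Measure.prod_restrict, ← Measure.volume_eq_prod]
    have hfirst : ‖g c‖ ≤ K * ∫ a in ball (c 0) δ, G (a, Fin.tail c) := by
      conv_lhs => rw [← Fin.cons_self_tail c]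
      exact DifferentiableOn.norm_le_setIntegral_ball (hg.comp (by fun_prop) hslice) hδ
    have hrest : ∀ a ∈ ball (c 0) δ,
        G (a, Fin.tail c) ≤ K ^ m * ∫ y in ball (Fin.tail c) δ, G (a, y) := fun a ha ↦
      ih (hg.comp (by fun_prop) fun y hy ↦ hcons a (ball_subset_closedBall ha) y hy)
    calc ‖g c‖ ≤ K * ∫ a in ball (c 0) δ, G (a, Fin.tail c) := hfirst
      _ ≤ K * ∫ a in ball (c 0) δ, K ^ m * ∫ y in ball (Fin.tail c) δ, G (a, y) := by
        refine mul_le_mul_of_nonneg_left (setIntegral_mono_on ?_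
          (hG'.integral_prod_left.const_mul _) measurableSet_ball hrest) (by positivity)
        exact (ContinuousOn.integrableOn_compact (isCompact_closedBall _ _)
          (hg.continuousOn.norm.comp (by fun_prop) hslice)).mono_set ball_subset_closedBall
      _ = K ^ (m + 1) * ∫ y in ball c δ, ‖g y‖ := by
        rw [integral_const_mul, ← mul_assoc, ← pow_succ',
          setIntegral_ball_eq_setIntegral_prod_fin_cons _ _ hδ, Measure.volume_eq_prod,
          setIntegral_prod _ hG]

theorem setIntegral_le_const_mul_setIntegral_prod {X Y : Type*} [MeasureSpace X]
    [MeasureSpace Y] [SFinite (volume : Measure X)] [SFinite (volume : Measure Y)]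
    {h : X → ℝ} {F : X × Y → ℝ} {s : Set X} {t : Set Y} {C : ℝ} (hs : MeasurableSet s)
    (hF : IntegrableOn F (s ×ˢ t)) (hh₀ : ∀ x, 0 ≤ h x)
    (hle : ∀ x ∈ s, h x ≤ C * ∫ y in t, F (x, y)) :
    ∫ x in s, h x ≤ C * ∫ p in s ×ˢ t, F p := by
  have hF' : Integrable F ((volume.restrict s).prod (volume.restrict t)) := by
    rwa [Measure.prod_restrict, ← Measure.volume_eq_prod]
  rw [Measure.volume_eq_prod, setIntegral_prod _ hF, ← integral_const_mul]
  exact integral_mono_of_nonneg (.of_forall hh₀) (hF'.integral_prod_left.const_mul C)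
    (ae_restrict_of_forall_mem hs hle)

theorem DifferentiableOn.integral_mul_norm_le_setIntegral_polydisc_prod_annulus
    [CompleteSpace E] {m : ℕ} {g : (Fin m → ℂ) × ℂ → E} {c : Fin m → ℂ} {w ζ : ℂ} {δ a b : ℝ}
    (hg : DifferentiableOn ℂ g (closedBall c δ ×ˢ closedBall w b)) (hδ : 0 < δ) (hab : a ≤ b)
    (hζ : ‖ζ - w‖ ≤ a) :
    (∫ ρ in a..b, ρ * (ρ - a)) * ‖g (c, ζ)‖ ≤ (3 / (2 * π * δ ^ 2)) ^ m * (b / (2 * π)) *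
      ∫ p in ball c δ ×ˢ (ball w b \ closedBall w a), ‖g p‖ := by
  set K := ∫ ρ in a..b, ρ * (ρ - a)
  have ha : 0 ≤ a := (norm_nonneg _).trans hζ
  have hK : 0 ≤ K := intervalIntegral.integral_nonneg hab fun ρ hρ ↦
    mul_nonneg (ha.trans hρ.1) (sub_nonneg.2 hρ.1)
  have hζb : ζ ∈ closedBall w b := mem_closedBall_iff_norm.2 (hζ.trans hab)
  have hpolydisc := DifferentiableOn.norm_le_setIntegral_polydisc (g := fun y ↦ g (y, ζ))
    (hg.comp (by fun_prop) fun y hy ↦ ⟨hy, hζb⟩) hδ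
  have hannulus : ∀ y ∈ ball c δ,
      K * ‖g (y, ζ)‖ ≤ b / (2 * π) * ∫ z in ball w b \ closedBall w a, ‖g (y, z)‖ :=
    fun y hy ↦ DifferentiableOn.integral_mul_norm_le_setIntegral_annulus
      (hg.comp (by fun_prop) fun z hz ↦ ⟨ball_subset_closedBall hy, hz⟩) hab hζ
  have hint : IntegrableOn (fun p ↦ ‖g p‖) (ball c δ ×ˢ (ball w b \ closedBall w a)) :=
    (ContinuousOn.integrableOn_compact ((isCompact_closedBall _ _).prod
      (isCompact_closedBall _ _)) hg.continuousOn.norm).mono_set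
      (prod_mono ball_subset_closedBall (sdiff_subset.trans ball_subset_closedBall))
  calc K * ‖g (c, ζ)‖ ≤ K * ((3 / (2 * π * δ ^ 2)) ^ m * ∫ y in ball c δ, ‖g (y, ζ)‖) := by
        gcongr
    _ = (3 / (2 * π * δ ^ 2)) ^ m * ∫ y in ball c δ, K * ‖g (y, ζ)‖ := by
        rw [integral_const_mul]; ring
    _ ≤ (3 / (2 * π * δ ^ 2)) ^ m * (b / (2 * π) *
          ∫ p in ball c δ ×ˢ (ball w b \ closedBall w a), ‖g p‖) := by
        gcongr
        exact setIntegral_le_const_mul_setIntegral_prod measurableSet_ball hint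
          (fun _ ↦ by positivity) hannulus
    _ = _ := (mul_assoc _ _ _).symm

theorem closedBall_one_sub_smul_subset_ball {F : Type*} [SeminormedAddCommGroup F]
    [NormedSpace ℝ F] {x : F} {s ε : ℝ} (hx : x ∈ ball 0 s) (hε : ε < 1) :
    closedBall ((1 - ε) • x) (ε * s) ⊆ ball 0 s := by
  refine closedBall_subset_ball' ?_
  rw [dist_zero_right, norm_smul, Real.norm_of_nonneg (by linarith)]
  nlinarith [mem_ball_zero_iff.1 hx]

theorem cauchy_l2_annulus_estimate_general
    {n : ℕ} (s R r ε : ℝ) (hs : 0 < s)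
    (hr : 0 < r) (hrR : r < R) (hε : 0 < ε) (hεR : ε < 1 - R) :
    ∃ C > (0:ℝ), ∀ (V : Set ((Fin (n-1) → ℂ) × ℂ)) (f : (Fin (n-1) → ℂ) × ℂ → ℂ),
      IsOpen V →
      closure ((Metric.ball (0 : Fin (n-1) → ℂ) s) ×ˢ (Metric.ball (0:ℂ) R)) ⊆ V →
      DifferentiableOn ℂ f V →
      ∀ z ∈ (fun p : (Fin (n-1) → ℂ) × ℂ => ((1-ε : ℝ) : ℂ) • p) ''
          ((Metric.ball (0 : Fin (n-1) → ℂ) s) ×ˢ (Metric.ball (0:ℂ) 1)),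
        ‖z.2‖ < r →
        ‖f z‖^2 ≤ C * ∫ w in (Metric.ball (0 : Fin (n-1) → ℂ) s) ×ˢ
          (Metric.ball (0:ℂ) R \ Metric.closedBall (0:ℂ) r), ‖f w‖^2 := by
  set K := ∫ ρ in r..R, ρ * (ρ - r)
  have hK : 0 < K := intervalIntegral.intervalIntegral_pos_of_pos_on
    ((by fun_prop : Continuous fun ρ : ℝ ↦ ρ * (ρ - r)).intervalIntegrable _ _)
    (fun ρ hρ ↦ mul_pos (hr.trans hρ.1) (sub_pos.2 hρ.1)) hrR
  set C := (3 / (2 * π * (ε * s) ^ 2)) ^ (n - 1) * (R / (2 * π))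
  have hC : 0 < C := mul_pos (by positivity) (div_pos (hr.trans hrR) two_pi_pos)
  refine ⟨C / K, div_pos hC hK, ?_⟩
  rintro V f - hV hf _ ⟨p, ⟨hp, -⟩, rfl⟩ hz
  set z := ((1 - ε : ℝ) : ℂ) • p
  have hf' : DifferentiableOn ℂ f (closedBall 0 s ×ˢ closedBall 0 R) := hf.mono <| by
    rwa [closure_prod_eq, closure_ball _ hs.ne', closure_ball _ (hr.trans hrR).ne'] at hV
  have hpolydisc : closedBall z.1 (ε * s) ⊆ ball 0 s := by
    rw [Prod.smul_fst, Complex.coe_smul]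
    exact closedBall_one_sub_smul_subset_ball hp (by linarith)
  have hint : IntegrableOn (fun w ↦ ‖f w‖ ^ 2) (ball 0 s ×ˢ (ball 0 R \ closedBall 0 r)) :=
    (ContinuousOn.integrableOn_compact ((isCompact_closedBall _ _).prod
      (isCompact_closedBall _ _)) (hf'.continuousOn.norm.pow 2)).mono_set
      (prod_mono ball_subset_closedBall (sdiff_subset.trans ball_subset_closedBall))
  have hlocal := DifferentiableOn.integral_mul_norm_le_setIntegral_polydisc_prod_annulus
    (g := fun p ↦ f p ^ 2)
    ((hf'.mono (prod_mono (hpolydisc.trans ball_subset_closedBall) subset_rfl)).pow 2)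
    (mul_pos hε hs) hrR.le (by rw [sub_zero]; exact hz.le)
  simp only [norm_pow] at hlocal
  rw [div_mul_eq_mul_div, le_div_iff₀' hK]
  exact hlocal.trans <| mul_le_mul_of_nonneg_left (setIntegral_mono_set hint
    (.of_forall fun _ ↦ by positivity)
    (prod_mono (ball_subset_closedBall.trans hpolydisc) subset_rfl).eventuallyLE) hC.le

/-- **Cauchy–L² estimate.** For a ball `B ⊆ ℂ^{n-1}` centered at the origin and
`0 < r < R < 1`, the value `|f(z)|²` of a function `f` holomorphic on a neighborhood
of the closure of `B × RΔ`, at any point `z ∈ (1-ε)(B × Δ)` with `|z₂| < r`, is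
bounded by a constant (depending only on `B, R, r, ε`) times `∫_{B × (RΔ \ rΔ̄)} |f|²`. -/
theorem cauchy_l2_annulus_estimate
    {n : ℕ} (s R r ε : ℝ) (hs : 0 < s)
    (hr : 0 < r) (hrR : r < R) (hR : R < 1) (hε : 0 < ε) (hεR : ε < 1 - R) :
    ∃ C > (0:ℝ), ∀ (V : Set ((Fin (n-1) → ℂ) × ℂ)) (f : (Fin (n-1) → ℂ) × ℂ → ℂ),
      IsOpen V →
      closure ((Metric.ball (0 : Fin (n-1) → ℂ) s) ×ˢ (Metric.ball (0:ℂ) R)) ⊆ V →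
      DifferentiableOn ℂ f V →
      ∀ z ∈ (fun p : (Fin (n-1) → ℂ) × ℂ => ((1-ε : ℝ) : ℂ) • p) ''
          ((Metric.ball (0 : Fin (n-1) → ℂ) s) ×ˢ (Metric.ball (0:ℂ) 1)),
        ‖z.2‖ < r →
        ‖f z‖^2 ≤ C * ∫ w in (Metric.ball (0 : Fin (n-1) → ℂ) s) ×ˢ
          (Metric.ball (0:ℂ) R \ Metric.closedBall (0:ℂ) r), ‖f w‖^2 :=
  cauchy_l2_annulus_estimate_general s R r ε hs hr hrR hε hεR
end

section
/- The Cartesian product E₁ × ⋯ × Eₙ ⊂ ℂⁿ of compact sets Eⱼ ⊂ ℂ, each of logarithmic capacity zero, is a compact complete pluripolar subset of ℂⁿ: there exists a plurisubharmonic function φ on ℂⁿ with φ⁻¹(-∞) = E₁ × ⋯ × Eₙ. -/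
open Complex Topology Filter Metric MeasureTheory Set

/-! The plurisubharmonic function is `φ z = maxⱼ uⱼ (zⱼ)`: along a complex line `t ↦ z + t w`
each `t ↦ uⱼ (zⱼ + t wⱼ)` is subharmonic (constant if `wⱼ = 0`, an affine change of variables
otherwise), a finite maximum of subharmonic functions is subharmonic, and `φ z = -∞` exactly
when every `uⱼ (zⱼ) = -∞`. -/

theorem upperSemicontinuousOn_iSup_of_finite {ι α δ : Type*} [Finite ι] [TopologicalSpace α]
    [CompleteLinearOrder δ] {f : ι → α → δ} {s : Set α}
    (h : ∀ i, UpperSemicontinuousOn (f i) s) :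
    UpperSemicontinuousOn (fun x => ⨆ i, f i x) s := by
  intro x hx y hy
  filter_upwards [eventually_all.2 fun i => h i x hx y ((le_iSup (f · x) i).trans_lt hy)]
    with z hz
  rcases isEmpty_or_nonempty ι with _ | _
  · simpa only [iSup_of_empty] using bot_le.trans_lt hy
  · obtain ⟨i, hi⟩ := exists_eq_ciSup_of_finite (f := (f · z))
    exact hi ▸ hz i

theorem DiffContOnCl.le_re_of_forall_mem_sphere {f : ℂ → ℂ} {c : ℂ} {r a : ℝ}
    (hf : DiffContOnCl ℂ f (ball c r)) (hr : r ≠ 0) (h : ∀ z ∈ sphere c r, a ≤ (f z).re) :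
    ∀ z ∈ closedBall c r, a ≤ (f z).re := by
  intro z hz
  have hexp : DiffContOnCl ℂ (fun z => Complex.exp (-f z)) (ball c r) :=
    ⟨hf.1.neg.cexp, hf.2.neg.cexp⟩
  have hnorm (w : ℂ) : ‖Complex.exp (-f w)‖ = Real.exp (-(f w).re) := by
    simp [Complex.norm_exp]
  have key : ‖Complex.exp (-f z)‖ ≤ Real.exp (-a) := by
    refine Complex.norm_le_of_forall_mem_frontier_norm_le isBounded_ball hexp (fun w hw => ?_)
      (by rwa [closure_ball c hr])
    rw [frontier_ball c hr] at hw
    rw [hnorm, Real.exp_le_exp]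
    linarith [h w hw]
  rw [hnorm, Real.exp_le_exp] at key
  linarith

theorem subharmonicOn_const (x : EReal) (s : Set ℂ) : SubharmonicOn (fun _ => x) s := by
  refine ⟨upperSemicontinuousOn_const, fun c r hr _ p hp z hz => ?_⟩
  induction x using EReal.rec with
  | bot => exact bot_le
  | top =>
    obtain ⟨w, hw⟩ := (NormedSpace.sphere_nonempty (x := c)).2 hr.le
    exact absurd (hp w hw) (EReal.coe_lt_top _).not_ge
  | coe x =>
    exact EReal.coe_le_coe_iff.2 <| p.differentiable.diffContOnCl.le_re_of_forall_mem_sphere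
      hr.ne' (fun w hw => EReal.coe_le_coe_iff.1 (hp w hw)) z hz

theorem SubharmonicOn.comp_affine {u : ℂ → EReal} {s : Set ℂ} (hu : SubharmonicOn u s)
    (a b : ℂ) : SubharmonicOn (fun t => u (a + t * b)) ((fun t => a + t * b) ⁻¹' s) := by
  rcases eq_or_ne b 0 with rfl | hb
  · simpa only [mul_zero, add_zero] using subharmonicOn_const (u a) _
  have hdist (z c : ℂ) : dist (a + z * b) (a + c * b) = dist z c * ‖b‖ := by
    simp [dist_eq_norm, ← sub_mul]
  have hsurj (w : ℂ) : ∃ t, a + t * b = w := ⟨(w - a) / b, by field_simp; ring⟩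
  have hb' : 0 < ‖b‖ := norm_pos_iff.2 hb
  refine ⟨hu.1.comp (by fun_prop) (mapsTo_preimage _ _), fun c r hr hball p hp => ?_⟩
  -- Transport `p` along the inverse affine map and use the disc `B(a + c b, r ‖b‖)`.
  set q := p.comp (Polynomial.C b⁻¹ * (Polynomial.X - Polynomial.C a))
  have hq (t : ℂ) : q.eval (a + t * b) = p.eval t := by
    simp [q, mul_left_comm b⁻¹, hb]
  have hmaj := hu.2 (a + c * b) (r * ‖b‖) (mul_pos hr hb') ?_ q ?_
  · intro z hz
    have hz' : a + z * b ∈ closedBall (a + c * b) (r * ‖b‖) := by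
      rw [mem_closedBall, hdist]
      exact mul_le_mul_of_nonneg_right hz hb'.le
    simpa only [hq] using hmaj _ hz'
  · intro w hw
    obtain ⟨t, rfl⟩ := hsurj w
    rw [mem_closedBall, hdist, mul_le_mul_iff_left₀ hb'] at hw
    exact hball hw
  · intro w hw
    obtain ⟨t, rfl⟩ := hsurj w
    rw [mem_sphere, hdist, mul_left_inj' hb'.ne'] at hw
    simpa only [hq] using hp t hw

theorem SubharmonicOn.iSup {ι : Type*} [Finite ι] {f : ι → ℂ → EReal} {s : Set ℂ}
    (hf : ∀ i, SubharmonicOn (f i) s) : SubharmonicOn (fun t => ⨆ i, f i t) s :=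
  ⟨upperSemicontinuousOn_iSup_of_finite fun i => (hf i).1, fun c r hr hball p hp z hz =>
    iSup_le fun i => (hf i).2 c r hr hball p
      (fun w hw => (le_iSup (f · w) i).trans (hp w hw)) z hz⟩

theorem plurisubharmonicOn_iSup_apply {ι : Type*} [Fintype ι] {u : ι → ℂ → EReal}
    (hu : ∀ i, SubharmonicOn (u i) univ) :
    PlurisubharmonicOn (fun z : ι → ℂ => ⨆ i, u i (z i)) univ := by
  refine ⟨upperSemicontinuousOn_iSup_of_finite fun i =>
    (hu i).1.comp (continuous_apply i).continuousOn (mapsTo_univ _ _), fun z w => ?_⟩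
  rw [show {t : ℂ | z + t • w ∈ univ} = univ from eq_univ_of_forall fun _ => trivial]
  refine SubharmonicOn.iSup fun i => ?_
  simpa using (hu i).comp_affine (z i) (w i)

/-- The Cartesian product of compact sets `Eⱼ ⊆ ℂ` of logarithmic capacity zero
(i.e. each is the `-∞` set of a global subharmonic function) is a compact complete
pluripolar subset of `ℂⁿ`: it is the `-∞` set of a global plurisubharmonic function. -/
theorem product_capacity_zero_complete_pluripolar
    {n : ℕ} (E : Fin n → Set ℂ) (hcpt : ∀ j, IsCompact (E j))
    (hcap : ∀ j, ∃ u : ℂ → EReal, SubharmonicOn u univ ∧ (∃ z, u z ≠ ⊥) ∧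
      E j = u ⁻¹' {⊥}) :
    IsCompact {z : Fin n → ℂ | ∀ j, z j ∈ E j} ∧
    ∃ φ : (Fin n → ℂ) → EReal, PlurisubharmonicOn φ univ ∧
      φ ⁻¹' {⊥} = {z : Fin n → ℂ | ∀ j, z j ∈ E j} := by
  choose u hu _ hE using hcap
  refine ⟨by simpa [Set.pi] using isCompact_univ_pi hcpt,
    fun z => ⨆ j, u j (z j), plurisubharmonicOn_iSup_apply hu, ?_⟩
  ext z
  simp [iSup_eq_bot, hE]
end

section
/- Let Ω ⊂ ℂⁿ (n ≥ 2) be a domain and A ⊂ Ω a closed set of Hausdorff (2n-2)-dimensional measure zero. Then every plurisubharmonic function on Ω \ A extends to a plurisubharmonic function on Ω (Shiffman's theorem). -/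
open Complex Topology Filter Metric MeasureTheory Set

open Module in
/-- Image of a compact null set under a pointwise `C¹` map is null. -/
lemma image_null_of_contDiffAt {n : ℕ} {d : ℝ} (hd : 0 ≤ d)
    {S : Set (Fin n → ℂ)} {f : (Fin n → ℂ) → (Fin n → ℂ)} (hS : IsCompact S)
    (hf : ∀ y ∈ S, ContDiffAt ℝ 1 f y) (h0 : μH[d] S = 0) : μH[d] (f '' S) = 0 := by
  have H : ∀ y : S, ∃ U : Set (Fin n → ℂ), IsOpen U ∧ (y : Fin n → ℂ) ∈ U ∧
      ∃ K, LipschitzOnWith K f U := by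
    rintro ⟨y, hy⟩
    obtain ⟨K, t, ht, hl⟩ := (hf y hy).exists_lipschitzOnWith
    obtain ⟨U, hUt, hUo, hyU⟩ := _root_.mem_nhds_iff.1 ht
    exact ⟨U, hUo, hyU, K, hl.mono hUt⟩
  choose U hUo hyU K hK using H
  obtain ⟨F, hF⟩ := hS.elim_finite_subcover U hUo
    (fun y hy => mem_iUnion.2 ⟨⟨y, hy⟩, hyU _⟩)
  have hsub : f '' S ⊆ ⋃ i ∈ F, f '' (S ∩ U i) := by
    rintro b ⟨a, ha, rfl⟩
    obtain ⟨i, hiF, hiU⟩ := mem_iUnion₂.1 (hF ha)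
    exact mem_iUnion₂.2 ⟨i, hiF, ⟨a, ⟨ha, hiU⟩, rfl⟩⟩
  refine measure_mono_null hsub ?_
  refine (measure_biUnion_null_iff F.countable_toSet).2 fun i _ => ?_
  have := ((hK i).mono inter_subset_right).hausdorffMeasure_image_le hd (s := S ∩ U i)
  refine le_antisymm (le_trans this ?_) zero_le
  rw [measure_mono_null inter_subset_left h0, mul_zero]

open Module in
lemma ker_slab_not_null {n : ℕ} (hn : 2 ≤ n) (ℓ : (Fin n → ℂ) →L[ℂ] ℂ) {w : Fin n → ℂ}
    (hℓw : ℓ w = 1) {ρ : ℝ} (hρ : 0 < ρ) :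
    μH[(2*n - 2 : ℕ)] {v : Fin n → ℂ | ℓ v = 0 ∧ ‖v‖ < ρ} ≠ 0 := by
  intro hnull
  set Kr := LinearMap.ker (ℓ : (Fin n → ℂ) →ₗ[ℂ] ℂ) with hKr
  have hrange : LinearMap.range (ℓ : (Fin n → ℂ) →ₗ[ℂ] ℂ) = ⊤ := by
    rw [LinearMap.range_eq_top]
    intro c
    exact ⟨c • w, by simp [hℓw]⟩
  have hkerC : finrank ℂ Kr = n - 1 := by
    have h := LinearMap.finrank_range_add_finrank_ker (ℓ : (Fin n → ℂ) →ₗ[ℂ] ℂ)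
    rw [hrange] at h
    simp only [finrank_top, Module.finrank_self, Module.finrank_pi, Fintype.card_fin] at h
    rw [← hKr] at h
    omega
  have hkerR : finrank ℝ Kr = 2 * n - 2 := by
    have h2 : finrank ℝ ℂ * finrank ℂ Kr = finrank ℝ Kr :=
      finrank_mul_finrank ℝ ℂ Kr
    rw [Complex.finrank_real_complex, hkerC] at h2
    omega
  have hfin : finrank ℝ (Fin (2*n-2) → ℝ) = finrank ℝ Kr := by
    simp [hkerR]
  let e : (Fin (2*n-2) → ℝ) ≃L[ℝ] Kr := ContinuousLinearEquiv.ofFinrankEq hfin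
  -- projection onto the kernel
  have hmem : ∀ y : Fin n → ℂ, (ContinuousLinearMap.id ℂ (Fin n → ℂ) - ℓ.smulRight w) y ∈ Kr := by
    intro y
    simp only [ContinuousLinearMap.coe_sub', Pi.sub_apply, ContinuousLinearMap.coe_id', id_eq,
      ContinuousLinearMap.smulRight_apply]
    rw [hKr, LinearMap.mem_ker]
    show ℓ (y - ℓ y • w) = 0
    simp [map_sub, _root_.map_smul, smul_eq_mul, hℓw]
  let π : (Fin n → ℂ) →L[ℂ] Kr :=
    (ContinuousLinearMap.id ℂ (Fin n → ℂ) - ℓ.smulRight w).codRestrict Kr hmem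
  let P : (Fin n → ℂ) →L[ℝ] (Fin (2*n-2) → ℝ) :=
    (e.symm.toContinuousLinearMap).comp (π.restrictScalars ℝ)
  set M := ‖e.toContinuousLinearMap‖ with hM
  have hMpos : 0 < M + 1 := by positivity
  set ρ' := ρ / (M + 1) with hρ'
  have hρ'pos : 0 < ρ' := by positivity
  have hball : ball (0 : Fin (2*n-2) → ℝ) ρ' ⊆ P '' {v : Fin n → ℂ | ℓ v = 0 ∧ ‖v‖ < ρ} := by
    intro q hq
    refine ⟨((e q : Kr) : Fin n → ℂ), ⟨(e q).2, ?_⟩, ?_⟩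
    · have h1 : ‖((e q : Kr) : Fin n → ℂ)‖ = ‖e q‖ := rfl
      have h2 : ‖e q‖ ≤ M * ‖q‖ := e.toContinuousLinearMap.le_opNorm q
      have h3 : ‖q‖ < ρ' := by simpa using mem_ball_iff_norm.1 hq
      calc ‖((e q : Kr) : Fin n → ℂ)‖ ≤ M * ‖q‖ := by rw [h1]; exact h2
        _ ≤ (M + 1) * ‖q‖ := by nlinarith [norm_nonneg q]
        _ < (M + 1) * ρ' := by exact mul_lt_mul_of_pos_left h3 hMpos
        _ = ρ := by rw [hρ']; field_simp [hMpos.ne']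
    · show e.symm (π ((e q : Kr) : Fin n → ℂ)) = q
      have : π ((e q : Kr) : Fin n → ℂ) = e q := by
        apply Subtype.ext
        have hker0 : ℓ ((e q : Kr) : Fin n → ℂ) = 0 := (e q).2
        show ((e q : Kr) : Fin n → ℂ) - ℓ ((e q : Kr) : Fin n → ℂ) • w = _
        rw [hker0, zero_smul, sub_zero]
      rw [this, ContinuousLinearEquiv.symm_apply_apply]
  -- measure contradiction
  have hlip : LipschitzWith ‖P‖₊ P := P.lipschitz
  have himg : μH[(2*n - 2 : ℕ)] (P '' {v : Fin n → ℂ | ℓ v = 0 ∧ ‖v‖ < ρ}) = 0 := by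
    have := (hlip.lipschitzOnWith (s := {v : Fin n → ℂ | ℓ v = 0 ∧ ‖v‖ < ρ})).hausdorffMeasure_image_le
      (d := ((2*n - 2 : ℕ) : ℝ)) (by positivity)
    refine le_antisymm (le_trans this ?_) zero_le
    rw [hnull, mul_zero]
  have hballnull : μH[(2*n - 2 : ℕ)] (ball (0 : Fin (2*n-2) → ℝ) ρ') = 0 :=
    measure_mono_null hball himg
  have hvol : (μH[(2*n - 2 : ℕ)] : Measure (Fin (2*n-2) → ℝ)) = volume := by
    have := MeasureTheory.hausdorffMeasure_pi_real (ι := Fin (2*n-2))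
    simpa using this
  rw [hvol] at hballnull
  exact absurd hballnull (measure_ball_pos volume _ hρ'pos).ne'

open Module in
lemma exists_good_dir {n : ℕ} (hn : 2 ≤ n) {A' : Set (Fin n → ℂ)}
    (hA'c : IsCompact A') (hA'0 : μH[(2*n - 2 : ℕ)] A' = 0)
    {x w : Fin n → ℂ} (hx : x ∉ A') {ρ : ℝ} (hρ : 0 < ρ) :
    ∃ v : Fin n → ℂ, ‖v‖ < ρ ∧ ∀ s : ℂ, x + s • (w + v) ∉ A' := by
  by_cases h0 : ∀ s : ℂ, x + s • w ∉ A'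
  · refine ⟨0, by simpa using hρ, by simpa using h0⟩
  · push_neg at h0
    obtain ⟨s₀, hs₀⟩ := h0
    have hw : w ≠ 0 := by
      rintro rfl
      simp only [smul_zero, add_zero] at hs₀
      exact hx hs₀
    have hA'ne : A'.Nonempty := ⟨_, hs₀⟩
    obtain ⟨ℓ₀, -, hℓ₀⟩ := exists_dual_vector ℂ w (norm_ne_zero_iff.2 hw)
    set ℓ : (Fin n → ℂ) →L[ℂ] ℂ := ((‖w‖ : ℂ))⁻¹ • ℓ₀ with hℓdef
    have hwn : (‖w‖ : ℂ) ≠ 0 := by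
      simpa using norm_ne_zero_iff.2 hw
    have hℓw : ℓ w = 1 := by
      simp only [hℓdef, ContinuousLinearMap.smul_apply, hℓ₀, smul_eq_mul]
      exact inv_mul_cancel₀ hwn
    set η := Metric.infDist x A' with hηdef
    have hη : 0 < η := (hA'c.isClosed.notMem_iff_infDist_pos hA'ne).1 hx
    have hwρ : 0 < ‖w‖ + ρ := by positivity
    set c₀ := η / (‖w‖ + ρ) with hc₀def
    have hc₀ : 0 < c₀ := by positivity
    set S := A' ∩ {y | c₀ ≤ ‖ℓ (y - x)‖} with hSdef
    have hScomp : IsCompact S := by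
      refine hA'c.inter_right ?_
      have hcont : Continuous fun y : Fin n → ℂ => ‖ℓ (y - x)‖ :=
        (ℓ.continuous.comp (continuous_id.sub continuous_const)).norm
      exact isClosed_le continuous_const hcont
    set F : (Fin n → ℂ) → (Fin n → ℂ) :=
      fun y => (ℓ (y - x))⁻¹ • (y - x - (ℓ (y - x)) • w) with hFdef
    have hFdiff : ∀ y ∈ S, ContDiffAt ℝ 1 F y := by
      intro y hy
      have hne : ℓ (y - x) ≠ 0 := by
        intro h
        have := hy.2
        rw [Set.mem_setOf_eq, h] at this
        simp at this
        exact absurd this (not_le.2 hc₀)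
      have hlin : ContDiffAt ℂ 1 (fun y : Fin n → ℂ => ℓ (y - x)) y :=
        (ℓ.contDiff.comp (contDiff_id.sub contDiff_const)).contDiffAt
      have h1 : ContDiffAt ℂ 1 (fun y : Fin n → ℂ => (ℓ (y - x))⁻¹) y := hlin.inv hne
      have h2 : ContDiffAt ℂ 1 (fun y : Fin n → ℂ => y - x - (ℓ (y - x)) • w) y := by
        exact ((contDiff_id.sub contDiff_const).contDiffAt).sub
          (hlin.smul contDiffAt_const)
      exact (h1.smul h2).restrict_scalars ℝ
    have hS0 : μH[(2*n - 2 : ℕ)] S = 0 := measure_mono_null inter_subset_left hA'0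
    have hFS0 : μH[(2*n - 2 : ℕ)] (F '' S) = 0 :=
      image_null_of_contDiffAt (by positivity) hScomp hFdiff hS0
    have hnsub : ¬ ({v : Fin n → ℂ | ℓ v = 0 ∧ ‖v‖ < ρ} ⊆ F '' S) := by
      intro hsub
      exact ker_slab_not_null hn ℓ hℓw hρ (measure_mono_null hsub hFS0)
    obtain ⟨v, hvmem, hvF⟩ := not_subset.1 hnsub
    refine ⟨v, hvmem.2, ?_⟩
    intro s hymem
    set y := x + s • (w + v) with hydef
    have hyx : y - x = s • (w + v) := by rw [hydef]; abel
    have hℓy : ℓ (y - x) = s := by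
      rw [hyx, _root_.map_smul, map_add, hℓw, hvmem.1, add_zero, smul_eq_mul, mul_one]
    have hdist : η ≤ ‖y - x‖ := by
      have := Metric.infDist_le_dist_of_mem (x := x) hymem
      rwa [dist_eq_norm, norm_sub_rev] at this
    have hnorm : ‖y - x‖ ≤ ‖s‖ * (‖w‖ + ρ) := by
      rw [hyx, norm_smul]
      have : ‖w + v‖ ≤ ‖w‖ + ρ := le_trans (norm_add_le _ _) (by linarith [hvmem.2.le])
      exact mul_le_mul_of_nonneg_left this (norm_nonneg s)
    have hsn : c₀ ≤ ‖s‖ := by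
      rw [hc₀def, div_le_iff₀ hwρ]
      linarith
    have hsne : s ≠ 0 := by
      intro h
      rw [h, norm_zero] at hsn
      exact absurd hsn (not_le.2 hc₀)
    have hyS : y ∈ S := ⟨hymem, by rw [Set.mem_setOf_eq, hℓy]; exact hsn⟩
    apply hvF
    refine ⟨y, hyS, ?_⟩
    show (ℓ (y - x))⁻¹ • (y - x - ℓ (y - x) • w) = v
    rw [hℓy, hyx, smul_add, add_sub_cancel_left, smul_smul, inv_mul_cancel₀ hsne, one_smul]

/-- **Shiffman's extension theorem.** Let `Ω ⊆ ℂⁿ` (`n ≥ 2`) be a domain and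
`A ⊆ Ω` relatively closed with vanishing `(2n-2)`-dimensional Hausdorff measure.
Every plurisubharmonic function on `Ω \ A` extends plurisubharmonically to `Ω`. -/
theorem shiffman_psh_extension
    {n : ℕ} (hn : 2 ≤ n) {Ω A : Set (Fin n → ℂ)}
    (hΩopen : IsOpen Ω) (hΩconn : IsConnected Ω)
    (hA : A ⊆ Ω) (hAcl : closure A ∩ Ω ⊆ A)
    (hH : μH[(2*n - 2 : ℕ)] A = 0)
    {φ : (Fin n → ℂ) → EReal} (hφ : PlurisubharmonicOn φ (Ω \ A)) :
    ∃ ψ : (Fin n → ℂ) → EReal, PlurisubharmonicOn ψ Ω ∧ ∀ z ∈ Ω \ A, ψ z = φ z := by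
  classical
  set Ω' : Set (Fin n → ℂ) := Ω \ A with hΩ'def
  set ψ : (Fin n → ℂ) → EReal := fun x => Filter.limsup φ (𝓝[Ω'] x) with hψdef
  -- equality of ψ and φ on Ω'
  have hψeq : ∀ x ∈ Ω', ψ x = φ x := by
    intro x hx
    apply le_antisymm
    · by_contra h
      push_neg at h
      obtain ⟨b, hb1, hb2⟩ := EReal.lt_iff_exists_real_btwn.1 h
      have hev : ∀ᶠ y in 𝓝[Ω'] x, φ y < (b : EReal) := hφ.1 x hx (b : EReal) hb1
      have hle : ψ x ≤ (b : EReal) :=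
        Filter.limsup_le_of_le (by isBoundedDefault) (hev.mono fun y hy => hy.le)
      exact absurd (lt_of_le_of_lt hle hb2) (lt_irrefl _)
    · refine Filter.le_limsup_of_frequently_le' ?_
      rw [Filter.Frequently]
      intro hev
      exact absurd le_rfl (mem_of_mem_nhdsWithin hx hev)
  -- upper semicontinuity of ψ on Ω
  have hψusc : UpperSemicontinuousOn ψ Ω := by
    intro x hx b hb
    obtain ⟨cR, hc1, hc2⟩ := EReal.lt_iff_exists_real_btwn.1 hb
    have hev : ∀ᶠ y in 𝓝[Ω'] x, φ y < (cR : EReal) :=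
      Filter.eventually_lt_of_limsup_lt hc1
    rw [Filter.eventually_iff] at hev
    obtain ⟨U, hUopen, hxU, hUsub⟩ := mem_nhdsWithin.1 hev
    have hUx : ∀ y ∈ U, ψ y ≤ (cR : EReal) := by
      intro y hy
      refine Filter.limsup_le_of_le (by isBoundedDefault) ?_
      filter_upwards [mem_nhdsWithin_of_mem_nhds (hUopen.mem_nhds hy),
        self_mem_nhdsWithin] with s hs1 hs2
      exact (hUsub ⟨hs1, hs2⟩).le
    filter_upwards [mem_nhdsWithin_of_mem_nhds (hUopen.mem_nhds hxU)] with y hy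
    exact lt_of_le_of_lt (hUx y hy) hc2
  -- upper semicontinuity of slices of ψ
  have hsliceUSC : ∀ z w : Fin n → ℂ,
      UpperSemicontinuousOn (fun t : ℂ => ψ (z + t • w)) {t : ℂ | z + t • w ∈ Ω} := by
    intro z w t ht b hb
    have hgc : Continuous fun t : ℂ => z + t • w := by continuity
    have htend : Tendsto (fun t : ℂ => z + t • w) (𝓝[{t : ℂ | z + t • w ∈ Ω}] t)
        (𝓝[Ω] (z + t • w)) :=
      hgc.continuousWithinAt.tendsto_nhdsWithin fun s hs => hs
    exact htend.eventually (hψusc _ ht b hb)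
  refine ⟨ψ, ⟨hψusc, ?_⟩, hψeq⟩
  intro z w
  refine ⟨hsliceUSC z w, ?_⟩
  intro c r hr hball p hpsph t₀ ht₀
  set g : ℂ → (Fin n → ℂ) := fun t => z + t • w with hgdef
  show ψ (g t₀) ≤ ((p.eval t₀).re : EReal)
  suffices Hε : ∀ ε : ℝ, 0 < ε → ψ (g t₀) ≤ (((p.eval t₀).re + ε : ℝ) : EReal) by
    by_contra hcon
    push_neg at hcon
    obtain ⟨b, hb1, hb2⟩ := EReal.lt_iff_exists_real_btwn.1 hcon
    have hbe : (p.eval t₀).re < b := by exact_mod_cast hb1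
    have hfin := Hε (b - (p.eval t₀).re) (by linarith)
    rw [show (p.eval t₀).re + (b - (p.eval t₀).re) = b by ring] at hfin
    exact absurd hb2 (not_lt.2 hfin)
  intro ε hε
  have hε2 : 0 < ε / 2 := by linarith
  -- tube around the image disc
  have hgc : Continuous g := by rw [hgdef]; continuity
  have hKcomp : IsCompact (g '' closedBall c r) := (isCompact_closedBall c r).image hgc
  have hKsub : g '' closedBall c r ⊆ Ω := by
    rintro _ ⟨t, ht, rfl⟩
    exact hball ht
  obtain ⟨δΩ, hδΩ, hδΩsub⟩ := hKcomp.exists_thickening_subset_open hΩopen hKsub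
  -- Claim 1 : uniform bound on φ near the image of the boundary circle
  obtain ⟨δ₁, hδ₁pos, hclaim1⟩ : ∃ δ₁ > 0, ∀ t ∈ sphere c r, ∀ y ∈ Ω',
      dist y (g t) < δ₁ → φ y ≤ (((p.eval t).re + ε : ℝ) : EReal) := by
    have hper : ∀ τ ∈ sphere c r, ∃ ρτ > 0,
        (∀ y ∈ Ω', dist y (g τ) < (1 + ‖w‖) * ρτ →
          φ y < (((p.eval τ).re + ε/2 : ℝ) : EReal)) ∧
        (∀ t : ℂ, dist t τ < ρτ → (p.eval τ).re < (p.eval t).re + ε/2) := by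
      intro τ hτ
      have hlim : Filter.limsup φ (𝓝[Ω'] (g τ)) < (((p.eval τ).re + ε/2 : ℝ) : EReal) := by
        refine lt_of_le_of_lt (hpsph τ hτ) ?_
        exact_mod_cast (by linarith : (p.eval τ).re < (p.eval τ).re + ε/2)
      have hev := Filter.eventually_lt_of_limsup_lt hlim
      rw [Filter.eventually_iff] at hev
      obtain ⟨ρ₁, hρ₁, hsub1⟩ := Metric.mem_nhdsWithin_iff.1 hev
      have hcont : ContinuousAt (fun t : ℂ => (p.eval t).re) τ :=
        (Complex.continuous_re.comp p.continuous).continuousAt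
      obtain ⟨ρ₂, hρ₂, hsub2⟩ := Metric.continuousAt_iff.1 hcont (ε/2) hε2
      have h1w : (0:ℝ) < 1 + ‖w‖ := by positivity
      refine ⟨min (ρ₁ / (1 + ‖w‖)) ρ₂, by positivity, ?_, ?_⟩
      · intro y hy hdist
        refine hsub1 ⟨?_, hy⟩
        rw [mem_ball]
        calc dist y (g τ) < (1 + ‖w‖) * min (ρ₁ / (1 + ‖w‖)) ρ₂ := hdist
          _ ≤ (1 + ‖w‖) * (ρ₁ / (1 + ‖w‖)) :=
              mul_le_mul_of_nonneg_left (min_le_left _ _) h1w.le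
          _ = ρ₁ := by field_simp
      · intro t hdist
        have h2 := hsub2 (lt_of_lt_of_le hdist (min_le_right _ _))
        rw [Real.dist_eq] at h2
        have h3 := abs_lt.1 h2
        linarith [h3.1]
    choose! ρfun hρpos hρprop using hper
    obtain ⟨F, hFsub⟩ := (isCompact_sphere c r).elim_finite_subcover
      (fun τ : ↥(sphere c r) => ball (τ : ℂ) (ρfun τ))
      (fun τ => isOpen_ball)
      (fun τ hτ => mem_iUnion.2 ⟨⟨τ, hτ⟩, mem_ball_self (hρpos τ hτ)⟩)
    have hsphne : (sphere c r).Nonempty := NormedSpace.sphere_nonempty.2 hr.le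
    obtain ⟨τ₀, hτ₀⟩ := hsphne
    obtain ⟨i₀, hi₀F, -⟩ := mem_iUnion₂.1 (hFsub hτ₀)
    have hFne : F.Nonempty := ⟨i₀, hi₀F⟩
    refine ⟨F.inf' hFne (fun j => ρfun j), ?_, ?_⟩
    · rw [gt_iff_lt, Finset.lt_inf'_iff]
      exact fun j _ => hρpos j j.2
    · intro t ht y hy hdist
      obtain ⟨i, hiF, hti⟩ := mem_iUnion₂.1 (hFsub ht)
      rw [mem_ball] at hti
      have hinf : F.inf' hFne (fun j => ρfun j) ≤ ρfun i := Finset.inf'_le _ hiF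
      have hgdist : dist (g t) (g i) = dist t (i : ℂ) * ‖w‖ := by
        rw [hgdef]
        simp only [dist_eq_norm]
        rw [add_sub_add_left_eq_sub, ← sub_smul, norm_smul]
      have hdist2 : dist y (g i) < (1 + ‖w‖) * ρfun i := by
        calc dist y (g i) ≤ dist y (g t) + dist (g t) (g i) := dist_triangle _ _ _
          _ < ρfun i + dist t (i : ℂ) * ‖w‖ := by
              rw [hgdist]; exact add_lt_add_of_lt_of_le (lt_of_lt_of_le hdist hinf) le_rfl
          _ ≤ ρfun i + ρfun i * ‖w‖ := by
              have := mul_le_mul_of_nonneg_right hti.le (norm_nonneg w)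
              linarith
          _ = (1 + ‖w‖) * ρfun i := by ring
      have hb1 := (hρprop i i.2).1 y hy hdist2
      have hb2 := (hρprop i i.2).2 t hti
      refine le_trans hb1.le ?_
      exact_mod_cast (by linarith : ((p.eval (i:ℂ)).re + ε/2 : ℝ) ≤ (p.eval t).re + ε)
  set δ := min δ₁ δΩ with hδdef
  have hδpos : 0 < δ := lt_min hδ₁pos hδΩ
  set T := cthickening (δ/2) (g '' closedBall c r) with hTdef
  have hTcomp : IsCompact T := hKcomp.cthickening
  have hTsub : T ⊆ Ω := by
    refine subset_trans (cthickening_subset_thickening' hδΩ ?_ _) hδΩsub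
    calc δ/2 < δ := by linarith
      _ ≤ δΩ := min_le_right _ _
  have hATa : A ∩ T = closure A ∩ T := by
    ext y
    constructor
    · rintro ⟨h1, h2⟩; exact ⟨subset_closure h1, h2⟩
    · rintro ⟨h1, h2⟩; exact ⟨hAcl ⟨h1, hTsub h2⟩, h2⟩
  have hAT : IsCompact (A ∩ T) := by
    refine hTcomp.of_isClosed_subset ?_ inter_subset_right
    rw [hATa]
    exact isClosed_closure.inter isClosed_cthickening
  have hAT0 : μH[(2*n - 2 : ℕ)] (A ∩ T) = 0 := measure_mono_null inter_subset_left hH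
  -- Claim 2 : bound on φ near g t₀
  have claim2 : ∀ x ∈ Ω', dist x (g t₀) < δ/4 →
      φ x ≤ (((p.eval t₀).re + ε : ℝ) : EReal) := by
    intro x hx hxd
    have hxnot : x ∉ A ∩ T := fun h => hx.2 h.1
    have hρv : (0:ℝ) < δ / (16 * (r + 1)) := by positivity
    obtain ⟨v, hvn, hvgood⟩ := exists_good_dir hn hAT hAT0 hxnot (w := w) hρv
    set u : Fin n → ℂ := w + v with hudef
    have hkey : ∀ t ∈ closedBall c r,
        (x + (t - t₀) • u ∈ Ω') ∧ dist (x + (t - t₀) • u) (g t) < δ/2 := by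
      intro t ht
      have htt₀ : dist t t₀ ≤ 2 * r := by
        calc dist t t₀ ≤ dist t c + dist c t₀ := dist_triangle _ _ _
          _ ≤ r + r := by
              refine add_le_add (mem_closedBall.1 ht) ?_
              rw [dist_comm]; exact mem_closedBall.1 ht₀
          _ = 2 * r := by ring
      have hdiff : x + (t - t₀) • u - g t = (x - g t₀) + (t - t₀) • v := by
        rw [hgdef, hudef]
        show x + (t - t₀) • (w + v) - (z + t • w) = (x - (z + t₀ • w)) + (t - t₀) • v
        module
      have hnormd : dist (x + (t - t₀) • u) (g t) < δ/2 := by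
        rw [dist_eq_norm, hdiff]
        have e1 : ‖(x - g t₀) + (t - t₀) • v‖ ≤ ‖x - g t₀‖ + ‖(t - t₀) • v‖ := norm_add_le _ _
        have e2 : ‖x - g t₀‖ < δ/4 := by rw [← dist_eq_norm]; exact hxd
        have e3 : ‖(t - t₀) • v‖ ≤ 2 * r * ‖v‖ := by
          rw [norm_smul]
          have : ‖t - t₀‖ ≤ 2 * r := by rw [← dist_eq_norm]; exact htt₀
          exact mul_le_mul_of_nonneg_right this (norm_nonneg v)
        have e4 : 2 * r * ‖v‖ ≤ 2 * r * (δ / (16 * (r + 1))) :=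
          mul_le_mul_of_nonneg_left hvn.le (by positivity)
        have e5 : 2 * r * (δ / (16 * (r + 1))) ≤ δ / 8 := by
          rw [show 2 * r * (δ / (16 * (r + 1))) = (2 * r * δ) / (16 * (r + 1)) by ring,
            div_le_div_iff₀ (by positivity) (by norm_num : (0:ℝ) < 8)]
          nlinarith [mul_nonneg hr.le hδpos.le, hδpos.le]
        linarith
      have hTmem : x + (t - t₀) • u ∈ T := by
        rw [hTdef]
        exact mem_cthickening_of_dist_le _ (g t) _ _ ⟨t, ht, rfl⟩ hnormd.le
      have hΩmem : x + (t - t₀) • u ∈ Ω := hTsub hTmem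
      have hnA : x + (t - t₀) • u ∉ A := fun hA' => hvgood (t - t₀) ⟨hA', hTmem⟩
      exact ⟨⟨hΩmem, hnA⟩, hnormd⟩
    have hballsub : closedBall c r ⊆ {t : ℂ | x - t₀ • u + t • u ∈ Ω'} := by
      intro t ht
      have heq : x - t₀ • u + t • u = x + (t - t₀) • u := by module
      rw [mem_setOf_eq, heq]
      exact (hkey t ht).1
    set q : Polynomial ℂ := p + Polynomial.C (ε : ℂ) with hqdef
    have hqeval : ∀ t : ℂ, (q.eval t).re = (p.eval t).re + ε := by
      intro t
      simp [hqdef]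
    have hbound : ∀ τ ∈ sphere c r, φ (x - t₀ • u + τ • u) ≤ ((q.eval τ).re : EReal) := by
      intro τ hτ
      have heq : x - t₀ • u + τ • u = x + (τ - t₀) • u := by module
      rw [heq, hqeval]
      have hmem := (hkey τ (sphere_subset_closedBall hτ)).1
      have hd := (hkey τ (sphere_subset_closedBall hτ)).2
      refine hclaim1 τ hτ _ hmem (lt_of_lt_of_le hd ?_)
      calc δ/2 ≤ δ := by linarith
        _ ≤ δ₁ := min_le_left _ _
    have hfinal := (hφ.2 (x - t₀ • u) u).2 c r hr hballsub q hbound t₀ ht₀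
    have hxeq : x - t₀ • u + t₀ • u = x := by module
    have hfinal2 : φ x ≤ ((q.eval t₀).re : EReal) := by
      rw [← hxeq]
      exact hfinal
    rw [hqeval t₀] at hfinal2
    exact hfinal2
  refine Filter.limsup_le_of_le (by isBoundedDefault) ?_
  filter_upwards [mem_nhdsWithin_of_mem_nhds (Metric.ball_mem_nhds (g t₀)
    (by positivity : (0:ℝ) < δ/4)), self_mem_nhdsWithin] with y h1 h2
  exact claim2 y h2 (mem_ball.1 h1)
end
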